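/- arXiv:2005.06732 — 5 statements merged into one kernel-verified Lean document; each statement's English description precedes it below -/
import Mathlib

section
/- Suppose y ∈ C²((0,1]) ∩ C([0,1]) satisfies y''(x) + (α/x) y'(x) = f(x) on (0,1) with α ≥ 1, y'(0⁺) = 0, y(1) = c, where f is continuous on [0,1]. Then y(x) = c + ∫₀¹ G(x,s) s^{α} f(s) ds for all x ∈ (0,1], where G is the Green's function (G(x,s) = log max(x,s) for α = 1, G(x,s) = (max(x,s)^{1-α} - 1)/(1-α) for α > 1). -/
open Set Real intervalIntegral Filter Topology

/-!
In divergence form the equation reads `(x^α y')' = x^α f`. Integrating from `0` and using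
`y'(0⁺) = 0` gives `x^α y'(x) = ∫₀ˣ s^α f(s) ds`, and a second integration from `x` to `1` gives
`y(x) = c - ∫ₓ¹ t^{-α} ∫₀ᵗ s^α f(s) ds dt`. On the other side, `G(x, ·)` is constant on `[0, x]`
and has derivative `s^{-α}` on `[x, 1]` with `G(x, 1) = 0`, so integrating the Green's integral
by parts on `[x, 1]` produces exactly the same double integral.
-/

/-- The Lane-Emden Green's function for shape factor `α ≥ 1`. -/
noncomputable def laneEmdenGreen (α x s : ℝ) : ℝ :=
  if α = 1 then Real.log (max x s) else ((max x s) ^ (1 - α) - 1) / (1 - α)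

/-- `∫₁ᵐ t^{-α} dt`, so that `laneEmdenGreen α x s = rpowNegPrimitive α (max x s)`. -/
noncomputable def rpowNegPrimitive (α m : ℝ) : ℝ :=
  if α = 1 then Real.log m else (m ^ (1 - α) - 1) / (1 - α)

lemma laneEmdenGreen_eq_rpowNegPrimitive (α x s : ℝ) :
    laneEmdenGreen α x s = rpowNegPrimitive α (max x s) := rfl

lemma rpowNegPrimitive_one (α : ℝ) : rpowNegPrimitive α 1 = 0 := by
  unfold rpowNegPrimitive
  split_ifs <;> simp

lemma hasDerivAt_rpowNegPrimitive (α : ℝ) {m : ℝ} (hm : 0 < m) :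
    HasDerivAt (rpowNegPrimitive α) (m ^ (-α)) m := by
  by_cases hα : α = 1
  · have hlog : rpowNegPrimitive α = Real.log := funext fun u => if_pos hα
    rw [hlog, hα, Real.rpow_neg_one]
    exact Real.hasDerivAt_log hm.ne'
  · have hpow : rpowNegPrimitive α = fun u => (u ^ (1 - α) - 1) / (1 - α) :=
      funext fun u => if_neg hα
    have h1α : (1 : ℝ) - α ≠ 0 := sub_ne_zero.2 (Ne.symm hα)
    rw [hpow]
    refine (((Real.hasDerivAt_rpow_const (p := 1 - α) (Or.inl hm.ne')).sub_const 1).div_const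
      (1 - α)).congr_deriv ?_
    rw [show (1 : ℝ) - α - 1 = -α by ring]
    field_simp

lemma continuous_laneEmdenGreen (α : ℝ) {x : ℝ} (hx : 0 < x) :
    Continuous (laneEmdenGreen α x) :=
  continuous_iff_continuousAt.2 fun s =>
    (hasDerivAt_rpowNegPrimitive α (hx.trans_le (le_max_left x s))).continuousAt.comp
      (continuous_const.max continuous_id).continuousAt

lemma integral_laneEmdenGreen_mul (α : ℝ) {P : ℝ → ℝ} (hP : Continuous P) {x : ℝ}
    (hx : x ∈ Ioc (0 : ℝ) 1) :
    ∫ s in (0 : ℝ)..1, laneEmdenGreen α x s * P s =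
      -∫ t in x..1, t ^ (-α) * ∫ s in (0 : ℝ)..t, P s := by
  obtain ⟨hx0, hx1⟩ := hx
  set H : ℝ → ℝ := fun t => ∫ s in (0 : ℝ)..t, P s
  have hGP : Continuous fun s => laneEmdenGreen α x s * P s :=
    (continuous_laneEmdenGreen α hx0).mul hP
  have hleft : ∫ s in (0 : ℝ)..x, laneEmdenGreen α x s * P s = rpowNegPrimitive α x * H x := by
    rw [← integral_const_mul]
    refine integral_congr fun s hs => ?_
    rw [uIcc_of_le hx0.le] at hs
    simp only [laneEmdenGreen_eq_rpowNegPrimitive, max_eq_left hs.2]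
  have hright : ∫ s in x..1, laneEmdenGreen α x s * P s =
      rpowNegPrimitive α 1 * H 1 - rpowNegPrimitive α x * H x - ∫ t in x..1, t ^ (-α) * H t := by
    have hpos : ∀ s ∈ uIcc x 1, 0 < s := fun s hs =>
      hx0.trans_le (uIcc_of_le hx1 ▸ hs).1
    rw [← integral_mul_deriv_eq_deriv_mul
      (fun s hs => hasDerivAt_rpowNegPrimitive α (hpos s hs))
      (fun s _ => hP.integral_hasStrictDerivAt 0 s |>.hasDerivAt)
      ((continuousOn_id.rpow_const fun s hs => Or.inl (hpos s hs).ne').intervalIntegrable)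
      (hP.intervalIntegrable _ _)]
    refine integral_congr fun s hs => ?_
    rw [uIcc_of_le hx1] at hs
    simp only [laneEmdenGreen_eq_rpowNegPrimitive, max_eq_right hs.1]
  rw [← integral_add_adjacent_intervals (hGP.intervalIntegrable 0 x) (hGP.intervalIntegrable x 1),
    hleft, hright, rpowNegPrimitive_one]
  ring

lemma hasDerivAt_rpow_mul_deriv {y : ℝ → ℝ} {α s y'' : ℝ} (hs : 0 < s)
    (hy : HasDerivAt (deriv y) y'' s) :
    HasDerivAt (fun t => t ^ α * deriv y t) (s ^ α * (y'' + α / s * deriv y s)) s := by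
  refine ((Real.hasDerivAt_rpow_const (p := α) (Or.inl hs.ne')).mul hy).congr_deriv ?_
  rw [Real.rpow_sub hs, Real.rpow_one]
  field_simp
  ring

lemma eq_of_hasDerivAt_zero_of_tendsto_nhdsGT {w : ℝ → ℝ} {a b L : ℝ}
    (hcont : ContinuousOn w (Ioc a b)) (hderiv : ∀ s ∈ Ioo a b, HasDerivAt w 0 s)
    (hlim : Tendsto w (𝓝[>] a) (𝓝 L)) :
    ∀ t ∈ Ioc a b, w t = L := by
  have hconst : ∀ t ∈ Ioc a b, w t = w b := fun t ht =>
    (constant_of_has_deriv_right_zero (hcont.mono fun s hs => ⟨ht.1.trans_le hs.1, hs.2⟩)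
      (fun s hs => (hderiv s ⟨ht.1.trans_le hs.1, hs.2⟩).hasDerivWithinAt) b
      (right_mem_Icc.2 ht.2)).symm
  intro t ht
  have hw : w =ᶠ[𝓝[>] a] fun _ => w b := by
    filter_upwards [Ioo_mem_nhdsGT (ht.1.trans_le ht.2)] with s hs
    exact hconst s ⟨hs.1, hs.2.le⟩
  rw [hconst t ht]
  exact tendsto_nhds_unique (tendsto_const_nhds.congr' hw.symm) hlim

lemma rpow_mul_deriv_eq_integral {α b : ℝ} (hα : 0 < α) {y g : ℝ → ℝ} (hg : Continuous g)
    (hC2 : ∀ x ∈ Ioc (0 : ℝ) b, ContDiffAt ℝ 2 y x)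
    (heq : ∀ x ∈ Ioo (0 : ℝ) b, deriv (deriv y) x + (α / x) * deriv y x = g x)
    (hbc0 : Tendsto (deriv y) (𝓝[>] 0) (𝓝 0)) :
    ∀ t ∈ Ioc (0 : ℝ) b, t ^ α * deriv y t = ∫ s in (0 : ℝ)..t, s ^ α * g s := by
  have hP : Continuous fun s : ℝ => s ^ α * g s := (Real.continuous_rpow_const hα.le).mul hg
  have hy' : ∀ x ∈ Ioc (0 : ℝ) b, DifferentiableAt ℝ (deriv y) x := fun x hx =>
    ((hC2 x hx).derivWithin (m := 1) (by norm_num)).differentiableAt one_ne_zero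
  refine fun t ht => sub_eq_zero.1 <| eq_of_hasDerivAt_zero_of_tendsto_nhdsGT
    (w := fun t => t ^ α * deriv y t - ∫ s in (0 : ℝ)..t, s ^ α * g s) ?_ ?_ ?_ t ht
  · refine ContinuousOn.sub ?_ (continuous_primitive hP.intervalIntegrable 0).continuousOn
    exact (Real.continuous_rpow_const hα.le).continuousOn.mul fun x hx =>
      (hy' x hx).continuousAt.continuousWithinAt
  · intro s hs
    have h := (hasDerivAt_rpow_mul_deriv (α := α) hs.1 (hy' s ⟨hs.1, hs.2.le⟩).hasDerivAt).sub
      (hP.integral_hasStrictDerivAt 0 s).hasDerivAt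
    rwa [heq s hs, sub_self] at h
  · have hpow : Tendsto (fun t : ℝ => t ^ α) (𝓝[>] 0) (𝓝 0) := by
      simpa [Real.zero_rpow hα.ne'] using
        (Real.continuousAt_rpow_const 0 α (Or.inr hα.le)).tendsto.mono_left nhdsWithin_le_nhds
    have hint : Tendsto (fun t => ∫ s in (0 : ℝ)..t, s ^ α * g s) (𝓝[>] 0) (𝓝 0) := by
      simpa using ((continuous_primitive hP.intervalIntegrable 0).tendsto 0).mono_left
        nhdsWithin_le_nhds
    simpa using (hpow.mul hbc0).sub hint

lemma sub_eq_integral_of_rpow_mul_deriv_eq {α x b : ℝ} (hx : 0 < x) (hxb : x ≤ b)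
    {y H : ℝ → ℝ} (hH : Continuous H) (hy : ∀ t ∈ Icc x b, DifferentiableAt ℝ y t)
    (hyH : ∀ t ∈ Icc x b, t ^ α * deriv y t = H t) :
    y b - y x = ∫ t in x..b, t ^ (-α) * H t := by
  rw [← uIcc_of_le hxb] at hy hyH
  have hpos : ∀ t ∈ uIcc x b, 0 < t := fun t ht => hx.trans_le (uIcc_of_le hxb ▸ ht).1
  refine (integral_eq_sub_of_hasDerivAt (fun t ht => ?_) ?_).symm
  · rw [← hyH t ht, Real.rpow_neg (hpos t ht).le,
      inv_mul_cancel_left₀ (Real.rpow_pos_of_pos (hpos t ht) α).ne']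
    exact (hy t ht).hasDerivAt
  · exact ((continuousOn_id.rpow_const fun t ht => Or.inl (hpos t ht).ne').mul
      hH.continuousOn).intervalIntegrable

theorem stmt4_general (α c : ℝ) (hα : 1 ≤ α) (f y : ℝ → ℝ)
    (hf : ContinuousOn f (Icc 0 1))
    (hC2 : ∀ x ∈ Ioc (0:ℝ) 1, ContDiffAt ℝ 2 y x)
    (heq : ∀ x ∈ Ioo (0:ℝ) 1,
      deriv (deriv y) x + (α / x) * deriv y x = f x)
    (hbc0 : Tendsto (deriv y) (𝓝[>] 0) (𝓝 0))
    (hbc1 : y 1 = c) :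
    ∀ x ∈ Ioc (0:ℝ) 1,
      y x = c + ∫ s in (0:ℝ)..1, laneEmdenGreen α x s * s ^ α * f s := by
  intro x hx
  have hα0 : 0 < α := one_pos.trans_le hα
  set F := IccExtend zero_le_one ((Icc 0 1).domRestrict f)
  have hF : Continuous F := hf.domRestrict.Icc_extend'
  have hFf : ∀ s ∈ Icc (0 : ℝ) 1, F s = f s := fun s hs => IccExtend_of_mem _ _ hs
  have hP : Continuous fun s : ℝ => s ^ α * F s := (Real.continuous_rpow_const hα0.le).mul hF
  have hfirst := rpow_mul_deriv_eq_integral hα0 hF hC2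
    (fun t ht => (heq t ht).trans (hFf t (Ioo_subset_Icc_self ht)).symm) hbc0
  have hsecond := sub_eq_integral_of_rpow_mul_deriv_eq hx.1 hx.2
    (continuous_primitive hP.intervalIntegrable 0)
    (fun t ht => ((hC2 t ⟨hx.1.trans_le ht.1, ht.2⟩).differentiableAt (by norm_num)))
    (fun t ht => hfirst t ⟨hx.1.trans_le ht.1, ht.2⟩)
  have hkernel : ∫ s in (0 : ℝ)..1, laneEmdenGreen α x s * s ^ α * f s =
      ∫ s in (0 : ℝ)..1, laneEmdenGreen α x s * (s ^ α * F s) := by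
    refine integral_congr fun s hs => ?_
    rw [uIcc_of_le zero_le_one] at hs
    simp only [hFf s hs, mul_assoc]
  rw [hkernel, integral_laneEmdenGreen_mul α hP hx, ← hsecond, hbc1]
  ring

theorem stmt4 (α c : ℝ) (hα : 1 ≤ α) (f y : ℝ → ℝ)
    (hf : ContinuousOn f (Icc 0 1))
    (hy : ContinuousOn y (Icc 0 1))
    (hC2 : ∀ x ∈ Ioc (0:ℝ) 1, ContDiffAt ℝ 2 y x)
    (heq : ∀ x ∈ Ioo (0:ℝ) 1,
      deriv (deriv y) x + (α / x) * deriv y x = f x)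
    (hbc0 : Tendsto (deriv y) (𝓝[>] 0) (𝓝 0))
    (hbc1 : y 1 = c) :
    ∀ x ∈ Ioc (0:ℝ) 1,
      y x = c + ∫ s in (0:ℝ)..1, laneEmdenGreen α x s * s ^ α * f s :=
  stmt4_general α c hα f y hf hC2 heq hbc0 hbc1
end

section
/- Conversely, if f : [0,1] → ℝ is continuous, α ≥ 1, and y(x) = c + ∫₀¹ G(x,s) s^{α} f(s) ds with G the Lane-Emden Green's function, then y is twice continuously differentiable on (0,1), satisfies y''(x) + (α/x) y'(x) = f(x) for x ∈ (0,1), lim_{x→0⁺} y'(x) = 0, and y(1) = c. -/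
/-!
Splitting the integral at `s = x`, the solution is `y = c + φ(x) F(x) + ∫ₓ¹ φ(s) s^α f(s) ds`,
where `φ(t) = G(t, t)` is the primitive of `t^(-α)` vanishing at `1` and
`F(x) = ∫₀ˣ s^α f(s) ds`. The terms `±φ(x) x^α f(x)` cancel on differentiation, leaving
`x^α y'(x) = F(x)`; differentiating once more gives the Lane-Emden equation, and
`|F(x)| ≤ x^(α+1) sup |f|` forces `y'(x) → 0` as `x → 0⁺`.
-/

open Set Real intervalIntegral Filter Topology

open MeasureTheory

noncomputable def laneEmdenPhi (α t : ℝ) : ℝ :=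
  if α = 1 then Real.log t else (t ^ (1 - α) - 1) / (1 - α)

lemma laneEmdenGreen_eq_phi_max (α x s : ℝ) :
    laneEmdenGreen α x s = laneEmdenPhi α (max x s) := rfl

lemma laneEmdenPhi_one (α : ℝ) : laneEmdenPhi α 1 = 0 := by
  unfold laneEmdenPhi; split_ifs <;> simp

lemma hasDerivAt_laneEmdenPhi (α : ℝ) {x : ℝ} (hx : 0 < x) :
    HasDerivAt (laneEmdenPhi α) (x ^ (-α)) x := by
  unfold laneEmdenPhi
  split_ifs with h
  · simpa [h, Real.rpow_neg_one] using Real.hasDerivAt_log hx.ne'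
  · have hα : (1 : ℝ) - α ≠ 0 := sub_ne_zero.mpr (Ne.symm h)
    refine (((Real.hasDerivAt_rpow_const (p := 1 - α) (Or.inl hx.ne')).sub_const 1).div_const
      (1 - α)).congr_deriv ?_
    rw [show 1 - α - 1 = -α by ring]
    field_simp

lemma continuousOn_laneEmdenPhi (α : ℝ) : ContinuousOn (laneEmdenPhi α) (Ioi 0) :=
  fun _ hx => (hasDerivAt_laneEmdenPhi α hx).continuousAt.continuousWithinAt

theorem integral_comp_max_mul_eq {φ g : ℝ → ℝ} {a x b : ℝ} (hax : a ≤ x) (hxb : x ≤ b)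
    (hg : IntervalIntegrable g volume a x)
    (hφg : IntervalIntegrable (fun s => φ s * g s) volume x b) :
    ∫ s in a..b, φ (max x s) * g s = φ x * (∫ s in a..x, g s) + ∫ s in x..b, φ s * g s := by
  have hleft : EqOn (fun s => φ (max x s) * g s) (fun s => φ x * g s) (uIcc a x) := by
    intro s hs
    rw [uIcc_of_le hax] at hs
    simp only [max_eq_left hs.2]
  have hright : EqOn (fun s => φ (max x s) * g s) (fun s => φ s * g s) (uIcc x b) := by
    intro s hs
    rw [uIcc_of_le hxb] at hs
    simp only [max_eq_right hs.1]
  have hint_left : IntervalIntegrable (fun s => φ (max x s) * g s) volume a x :=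
    (intervalIntegrable_congr (hleft.mono uIoc_subset_uIcc)).mpr (hg.const_mul _)
  have hint_right : IntervalIntegrable (fun s => φ (max x s) * g s) volume x b :=
    (intervalIntegrable_congr (hright.mono uIoc_subset_uIcc)).mpr hφg
  rw [← integral_add_adjacent_intervals hint_left hint_right, integral_congr hleft,
    integral_congr hright, intervalIntegral.integral_const_mul]

lemma contDiffOn_two_of_hasDerivAt {f f' f'' : ℝ → ℝ} {s : Set ℝ} (hs : IsOpen s)
    (hf : ∀ x ∈ s, HasDerivAt f (f' x) x) (hf' : ∀ x ∈ s, HasDerivAt f' (f'' x) x)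
    (hf'' : ContinuousOn f'' s) : ContDiffOn ℝ 2 f s := by
  have hderiv : EqOn (deriv f) f' s := fun x hx => (hf x hx).deriv
  have hderiv' : EqOn (deriv f') f'' s := fun x hx => (hf' x hx).deriv
  rw [show (2 : WithTop ℕ∞) = 1 + 1 from rfl, contDiffOn_succ_iff_deriv_of_isOpen hs]
  refine ⟨fun x hx => (hf x hx).differentiableAt.differentiableWithinAt, by simp,
    (ContDiffOn.congr ?_ hderiv)⟩
  rw [show (1 : WithTop ℕ∞) = 0 + 1 from rfl, contDiffOn_succ_iff_deriv_of_isOpen hs]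
  exact ⟨fun x hx => (hf' x hx).differentiableAt.differentiableWithinAt, by simp,
    contDiffOn_zero.mpr (hf''.congr hderiv')⟩

section LaneEmden

variable {α : ℝ} {f : ℝ → ℝ}

noncomputable def laneEmdenMoment (α : ℝ) (f : ℝ → ℝ) (x : ℝ) : ℝ :=
  ∫ s in (0 : ℝ)..x, s ^ α * f s

lemma continuousOn_rpow_mul (hα : 0 ≤ α) (hf : ContinuousOn f (Icc 0 1)) :
    ContinuousOn (fun s => s ^ α * f s) (Icc 0 1) :=
  (Real.continuous_rpow_const hα).continuousOn.mul hf

lemma hasDerivAt_laneEmdenMoment (hα : 0 ≤ α) (hf : ContinuousOn f (Icc 0 1)) {x : ℝ}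
    (hx : x ∈ Ioo (0 : ℝ) 1) :
    HasDerivAt (laneEmdenMoment α f) (x ^ α * f x) x := by
  have hg := continuousOn_rpow_mul hα hf
  exact integral_hasDerivAt_right
    ((hg.mono (Icc_subset_Icc_right hx.2.le)).intervalIntegrable_of_Icc hx.1.le)
    ((hg.mono Ioo_subset_Icc_self).stronglyMeasurableAtFilter isOpen_Ioo x hx)
    (hg.continuousAt (Icc_mem_nhds hx.1 hx.2))

lemma abs_laneEmdenMoment_le (hα : 0 ≤ α) {M : ℝ} (hM : ∀ s ∈ Icc (0 : ℝ) 1, ‖f s‖ ≤ M)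
    {x : ℝ} (hx : x ∈ Icc (0 : ℝ) 1) :
    |laneEmdenMoment α f x| ≤ x ^ α * M * x := by
  have hbound := norm_integral_le_of_norm_le_const (a := 0) (b := x) (C := x ^ α * M)
    (f := fun s => s ^ α * f s) fun s hs => by
      rw [uIoc_of_le hx.1] at hs
      rw [norm_mul, Real.norm_of_nonneg (Real.rpow_nonneg hs.1.le α)]
      exact mul_le_mul (Real.rpow_le_rpow hs.1.le hs.2 hα) (hM s ⟨hs.1.le, hs.2.trans hx.2⟩)
        (norm_nonneg _) (Real.rpow_nonneg hx.1 α)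
  unfold laneEmdenMoment
  simpa [abs_of_nonneg hx.1] using hbound

lemma abs_rpow_neg_mul_laneEmdenMoment_le (hα : 0 ≤ α) {M : ℝ}
    (hM : ∀ s ∈ Icc (0 : ℝ) 1, ‖f s‖ ≤ M) {x : ℝ} (hx : x ∈ Ioc (0 : ℝ) 1) :
    |x ^ (-α) * laneEmdenMoment α f x| ≤ M * x := by
  have hpos : 0 < x ^ (-α) := Real.rpow_pos_of_pos hx.1 _
  calc |x ^ (-α) * laneEmdenMoment α f x|
      = x ^ (-α) * |laneEmdenMoment α f x| := by rw [abs_mul, abs_of_pos hpos]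
    _ ≤ x ^ (-α) * (x ^ α * M * x) :=
        mul_le_mul_of_nonneg_left (abs_laneEmdenMoment_le hα hM (Ioc_subset_Icc_self hx))
          hpos.le
    _ = M * x := by
        rw [← mul_assoc, ← mul_assoc, ← Real.rpow_add hx.1, neg_add_cancel, Real.rpow_zero,
          one_mul]

lemma integral_laneEmdenGreen_eq (hα : 0 ≤ α) (hf : ContinuousOn f (Icc 0 1)) {x : ℝ}
    (hx : x ∈ Ioc (0 : ℝ) 1) :
    ∫ s in (0 : ℝ)..1, laneEmdenGreen α x s * s ^ α * f s =
      laneEmdenPhi α x * laneEmdenMoment α f x +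
        ∫ s in x..1, laneEmdenPhi α s * (s ^ α * f s) := by
  have hg := continuousOn_rpow_mul hα hf
  simp_rw [laneEmdenGreen_eq_phi_max, mul_assoc]
  refine integral_comp_max_mul_eq (φ := laneEmdenPhi α) hx.1.le hx.2
    ((hg.mono (Icc_subset_Icc_right hx.2)).intervalIntegrable_of_Icc hx.1.le) ?_
  refine ContinuousOn.intervalIntegrable_of_Icc hx.2 (ContinuousOn.mul ?_ ?_)
  · exact (continuousOn_laneEmdenPhi α).mono fun t ht => hx.1.trans_le ht.1
  · exact hg.mono (Icc_subset_Icc_left hx.1.le)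

lemma hasDerivAt_integral_laneEmdenGreen (hα : 0 ≤ α) (hf : ContinuousOn f (Icc 0 1))
    {x : ℝ} (hx : x ∈ Ioo (0 : ℝ) 1) :
    HasDerivAt (fun x => ∫ s in (0 : ℝ)..1, laneEmdenGreen α x s * s ^ α * f s)
      (x ^ (-α) * laneEmdenMoment α f x) x := by
  have hg := continuousOn_rpow_mul hα hf
  have hφg : ContinuousOn (fun s => laneEmdenPhi α s * (s ^ α * f s)) (Ioo 0 1) :=
    ((continuousOn_laneEmdenPhi α).mono fun _ ht => ht.1).mul (hg.mono Ioo_subset_Icc_self)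
  have htail : HasDerivAt (fun x => ∫ s in x..1, laneEmdenPhi α s * (s ^ α * f s))
      (-(laneEmdenPhi α x * (x ^ α * f x))) x :=
    integral_hasDerivAt_left
      ((((continuousOn_laneEmdenPhi α).mono fun _ ht => hx.1.trans_le ht.1).mul
        (hg.mono (Icc_subset_Icc_left hx.1.le))).intervalIntegrable_of_Icc hx.2.le)
      (hφg.stronglyMeasurableAtFilter isOpen_Ioo x hx) (hφg.continuousAt (isOpen_Ioo.mem_nhds hx))
  have hsum := ((hasDerivAt_laneEmdenPhi α hx.1).mul
    (hasDerivAt_laneEmdenMoment hα hf hx)).add htail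
  rw [add_neg_cancel_right] at hsum
  refine hsum.congr_of_eventuallyEq ?_
  filter_upwards [Ioo_mem_nhds hx.1 hx.2] with t ht
  exact integral_laneEmdenGreen_eq hα hf ⟨ht.1, ht.2.le⟩

lemma hasDerivAt_rpow_neg_mul_laneEmdenMoment (hα : 0 ≤ α) (hf : ContinuousOn f (Icc 0 1))
    {x : ℝ} (hx : x ∈ Ioo (0 : ℝ) 1) :
    HasDerivAt (fun t => t ^ (-α) * laneEmdenMoment α f t)
      (-α * x ^ (-α - 1) * laneEmdenMoment α f x + f x) x := by
  have hcancel : x ^ (-α) * (x ^ α * f x) = f x := by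
    rw [← mul_assoc, ← Real.rpow_add hx.1, neg_add_cancel, Real.rpow_zero, one_mul]
  have h := (Real.hasDerivAt_rpow_const (p := -α) (Or.inl hx.1.ne')).mul
    (hasDerivAt_laneEmdenMoment hα hf hx)
  rwa [hcancel] at h

end LaneEmden

theorem stmt5 (α c : ℝ) (hα : 1 ≤ α) (f : ℝ → ℝ)
    (hf : ContinuousOn f (Icc 0 1))
    (y : ℝ → ℝ)
    (hy : ∀ x, y x = c + ∫ s in (0:ℝ)..1, laneEmdenGreen α x s * s ^ α * f s) :
    ContDiffOn ℝ 2 y (Ioo 0 1) ∧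
    (∀ x ∈ Ioo (0:ℝ) 1,
      deriv (deriv y) x + (α / x) * deriv y x = f x) ∧
    Tendsto (deriv y) (𝓝[>] 0) (𝓝 0) ∧
    y 1 = c := by
  have hα₀ : 0 ≤ α := zero_le_one.trans hα
  set y' := fun t => t ^ (-α) * laneEmdenMoment α f t
  have hy' : ∀ x ∈ Ioo (0 : ℝ) 1, HasDerivAt y (y' x) x := fun x hx => by
    simpa only [funext hy] using (hasDerivAt_integral_laneEmdenGreen hα₀ hf hx).const_add c
  have hy'' := fun x (hx : x ∈ Ioo (0 : ℝ) 1) => hasDerivAt_rpow_neg_mul_laneEmdenMoment hα₀ hf hx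
  have hderiv : EqOn (deriv y) y' (Ioo 0 1) := fun x hx => (hy' x hx).deriv
  refine ⟨contDiffOn_two_of_hasDerivAt isOpen_Ioo hy' hy'' ?_, fun x hx => ?_, ?_, ?_⟩
  · refine ContinuousOn.add (ContinuousOn.mul ?_ fun x hx =>
      (hasDerivAt_laneEmdenMoment hα₀ hf hx).continuousAt.continuousWithinAt)
      (hf.mono Ioo_subset_Icc_self)
    exact continuousOn_const.mul fun x hx =>
      (Real.continuousAt_rpow_const x _ (Or.inl hx.1.ne')).continuousWithinAt
  · rw [((hderiv.eventuallyEq_of_mem (isOpen_Ioo.mem_nhds hx)).deriv_eq).trans (hy'' x hx).deriv,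
      hderiv hx, Real.rpow_sub_one hx.1.ne']
    field_simp
    ring
  · obtain ⟨M, hM⟩ := isCompact_Icc.exists_bound_of_continuousOn hf
    have hlin : Tendsto (fun x => M * x) (𝓝[>] 0) (𝓝 0) := by
      simpa using ((continuous_const_mul M).tendsto 0).mono_left nhdsWithin_le_nhds
    refine squeeze_zero_norm' ?_ hlin
    filter_upwards [Ioo_mem_nhdsGT zero_lt_one] with x hx
    rw [hderiv hx]
    exact abs_rpow_neg_mul_laneEmdenMoment_le hα₀ hM (Ioo_subset_Ioc_self hx)
  · rw [hy, integral_laneEmdenGreen_eq hα₀ hf ⟨zero_lt_one, le_rfl⟩, laneEmdenPhi_one]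
    simp
end

section
/- For α ≥ 1 and a continuous function f : [0,1] → ℝ, the function y(x) = ∫₀ˣ t^{-α} (∫₀ᵗ s^{α} f(s) ds) dt is well-defined on [0,1] (the inner integral is O(t^{α+1}) so the integrand is O(t)), is C¹ on [0,1] with y(0) = 0 and y'(0) = 0, and satisfies x^{-α} (x^{α} y'(x))' = f(x) for x ∈ (0,1). -/
open Set Real intervalIntegral

theorem stmt11 (α : ℝ) (hα : 1 ≤ α) (f : ℝ → ℝ)
    (hf : ContinuousOn f (Icc 0 1))
    (y : ℝ → ℝ)
    (hy : ∀ x, y x = ∫ t in (0:ℝ)..x, t ^ (-α) * ∫ s in (0:ℝ)..t, s ^ α * f s) :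
    IntervalIntegrable (fun t => t ^ (-α) * ∫ s in (0:ℝ)..t, s ^ α * f s)
      MeasureTheory.volume 0 1 ∧
    ContDiffOn ℝ 1 y (Icc 0 1) ∧
    y 0 = 0 ∧
    derivWithin y (Icc 0 1) 0 = 0 ∧
    (∀ x ∈ Ioo (0:ℝ) 1,
      x ^ (-α) * deriv (fun t => t ^ α * deriv y t) x = f x) := by
  have hα0 : (0:ℝ) < α := lt_of_lt_of_le one_pos hα
  set φ : ℝ → ℝ := fun s => s ^ α * f s with hφdef
  set g : ℝ → ℝ := fun t => ∫ s in (0:ℝ)..t, φ s with hgdef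
  set h : ℝ → ℝ := fun t => t ^ (-α) * g t with hhdef
  have hIcc : uIcc (0:ℝ) 1 = Icc 0 1 := uIcc_of_le zero_le_one
  have hcφ : ContinuousOn φ (Icc 0 1) := by
    apply ContinuousOn.mul _ hf
    intro s _
    exact (Real.continuousAt_rpow_const s α (Or.inr hα0.le)).continuousWithinAt
  have hφint : MeasureTheory.IntegrableOn φ (uIcc (0:ℝ) 1) := by
    rw [hIcc]; exact hcφ.integrableOn_compact isCompact_Icc
  have hφii : IntervalIntegrable φ MeasureTheory.volume 0 1 := by
    apply ContinuousOn.intervalIntegrable; rwa [hIcc]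
  have hgc : ContinuousOn g (Icc 0 1) := by
    rw [← hIcc]; exact intervalIntegral.continuousOn_primitive_interval hφint
  obtain ⟨M, hM⟩ : ∃ M, ∀ s ∈ Icc (0:ℝ) 1, ‖f s‖ ≤ M :=
    IsCompact.exists_bound_of_continuousOn isCompact_Icc hf
  have hM0 : 0 ≤ M := le_trans (norm_nonneg _) (hM 0 ⟨le_refl 0, zero_le_one⟩)
  have hg0 : g 0 = 0 := intervalIntegral.integral_same
  have hh0 : h 0 = 0 := by
    rw [hhdef]; simp [hg0]
  -- bound on h
  have hhb : ∀ t ∈ Icc (0:ℝ) 1, ‖h t‖ ≤ M / (α + 1) * t := by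
    intro t ht
    rcases ht.1.eq_or_lt with h0 | h0
    · rw [← h0]
      simp [hh0, hM0, le_div_iff₀ (by linarith : (0:ℝ) < α + 1)]
    · have hgb : |g t| ≤ M / (α + 1) * t ^ (α + 1) := by
        have h1 : |g t| ≤ ∫ s in (0:ℝ)..t, M * s ^ α := by
          refine le_trans (intervalIntegral.abs_integral_le_integral_abs ht.1) ?_
          apply intervalIntegral.integral_mono_on ht.1
          · exact (hφii.mono_set (by rw [hIcc, uIcc_of_le ht.1]; exact Icc_subset_Icc le_rfl ht.2)).abs
          · apply ContinuousOn.intervalIntegrable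
            apply ContinuousOn.mul continuousOn_const
            intro s _
            exact (Real.continuousAt_rpow_const s α (Or.inr hα0.le)).continuousWithinAt
          · intro s hs
            have hs0 : 0 ≤ s := hs.1
            have hfb : |f s| ≤ M := by
              have := hM s ⟨hs.1, le_trans hs.2 ht.2⟩
              rwa [Real.norm_eq_abs] at this
            calc |φ s| = s ^ α * |f s| := by
                  rw [hφdef, abs_mul, abs_of_nonneg (Real.rpow_nonneg hs0 α)]
              _ ≤ s ^ α * M := mul_le_mul_of_nonneg_left hfb (Real.rpow_nonneg hs0 α)
              _ = M * s ^ α := by ring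
        have h2 : ∫ s in (0:ℝ)..t, M * s ^ α = M / (α + 1) * t ^ (α + 1) := by
          rw [intervalIntegral.integral_const_mul, integral_rpow (Or.inl (by linarith))]
          rw [Real.zero_rpow (by linarith)]
          ring
        linarith [h1, h2.le]
      have hpow : t ^ (-α) * t ^ (α + 1) = t := by
        rw [← Real.rpow_add h0, (by ring : -α + (α + 1) = 1), Real.rpow_one]
      calc ‖h t‖ = t ^ (-α) * |g t| := by
            rw [hhdef]; rw [Real.norm_eq_abs, abs_mul, abs_of_nonneg (Real.rpow_nonneg ht.1 (-α))]
        _ ≤ t ^ (-α) * (M / (α + 1) * t ^ (α + 1)) :=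
            mul_le_mul_of_nonneg_left hgb (Real.rpow_nonneg ht.1 (-α))
        _ = M / (α + 1) * (t ^ (-α) * t ^ (α + 1)) := by ring
        _ = M / (α + 1) * t := by rw [hpow]
  -- continuity of h on Icc
  have hch : ContinuousOn h (Icc 0 1) := by
    intro t ht
    rcases ht.1.eq_or_lt with h0 | h0
    · subst h0
      show Filter.Tendsto h _ (nhds (h 0))
      rw [hh0]
      apply squeeze_zero_norm'
      · filter_upwards [self_mem_nhdsWithin] with t ht using hhb t ht
      · have : Filter.Tendsto (fun t : ℝ => M / (α + 1) * t) (nhds 0) (nhds 0) := by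
          have hc : Continuous (fun t : ℝ => M / (α + 1) * t) := by continuity
          simpa using hc.tendsto 0
        exact this.mono_left nhdsWithin_le_nhds
    · exact ((Real.continuousAt_rpow_const t (-α) (Or.inl h0.ne')).continuousWithinAt).mul (hgc t ht)
  have part1 : IntervalIntegrable h MeasureTheory.volume 0 1 := by
    apply ContinuousOn.intervalIntegrable; rwa [hIcc]
  have hy2 : y = fun x => ∫ t in (0:ℝ)..x, h t := funext hy
  -- measurability helper
  have hmeasIcc : ∀ x : ℝ, StronglyMeasurableAtFilter h (nhdsWithin x (Icc 0 1)) :=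
    fun x => hch.stronglyMeasurableAtFilter_nhdsWithin measurableSet_Icc x
  have hderIoo : ∀ t ∈ Ioo (0:ℝ) 1, HasDerivAt y (h t) t := by
    intro t ht
    rw [hy2]
    refine intervalIntegral.integral_hasDerivAt_right (part1.mono_set ?_) ?_ ?_
    · rw [hIcc, uIcc_of_le ht.1.le]; exact Icc_subset_Icc le_rfl ht.2.le
    · exact (hch.mono Ioo_subset_Icc_self).stronglyMeasurableAtFilter isOpen_Ioo t ht
    · exact ContinuousAt.mul
        (Real.continuousAt_rpow_const t (-α) (Or.inl ht.1.ne'))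
        (hgc.continuousAt (Icc_mem_nhds ht.1 ht.2))
  have hyw : ∀ x ∈ Icc (0:ℝ) 1, HasDerivWithinAt y (h x) (Icc 0 1) x := by
    intro x hx
    rcases hx.1.eq_or_lt with h0 | h0
    · subst h0
      have hle : nhdsWithin (0:ℝ) (Ioi 0) ≤ nhdsWithin (0:ℝ) (Icc 0 1) := by
        apply nhdsWithin_le_of_mem
        exact mem_nhdsWithin.mpr
          ⟨Iio 1, isOpen_Iio, by norm_num, fun z hz => ⟨hz.2.le, hz.1.le⟩⟩
      obtain ⟨s, hs, hms⟩ := hmeasIcc 0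
      have hd : HasDerivWithinAt (fun u => ∫ t in (0:ℝ)..u, h t) (h 0) (Ici 0) 0 :=
        intervalIntegral.integral_hasDerivWithinAt_right (IntervalIntegrable.refl)
          ⟨s, hle hs, hms⟩ ((hch 0 ⟨le_rfl, zero_le_one⟩).mono_left hle)
      rw [hy2]
      exact hd.mono Icc_subset_Ici_self
    · rcases hx.2.eq_or_lt with h1 | h1
      · subst h1
        have hle : nhdsWithin (1:ℝ) (Iic 1) ≤ nhdsWithin (1:ℝ) (Icc 0 1) := by
          apply nhdsWithin_le_of_mem
          exact mem_nhdsWithin.mpr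
            ⟨Ioi 0, isOpen_Ioi, by norm_num, fun z hz => ⟨hz.1.le, hz.2⟩⟩
        obtain ⟨s, hs, hms⟩ := hmeasIcc 1
        have hd : HasDerivWithinAt (fun u => ∫ t in (0:ℝ)..u, h t) (h 1) (Iic 1) 1 :=
          intervalIntegral.integral_hasDerivWithinAt_right part1
            ⟨s, hle hs, hms⟩ ((hch 1 ⟨zero_le_one, le_rfl⟩).mono_left hle)
        rw [hy2]
        exact hd.mono Icc_subset_Iic_self
      · exact (hderIoo x ⟨h0, h1⟩).hasDerivWithinAt
  have hdw : ∀ x ∈ Icc (0:ℝ) 1, derivWithin y (Icc 0 1) x = h x := fun x hx =>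
    (hyw x hx).derivWithin (uniqueDiffOn_Icc one_pos x hx)
  refine ⟨part1, ?_, ?_, ?_, ?_⟩
  · rw [show (1 : WithTop ℕ∞) = 0 + 1 by norm_num,
      contDiffOn_succ_iff_derivWithin (uniqueDiffOn_Icc one_pos)]
    refine ⟨fun x hx => (hyw x hx).differentiableWithinAt, by simp, ?_⟩
    exact contDiffOn_zero.mpr (hch.congr hdw)
  · rw [hy 0]; simp
  · rw [hdw 0 ⟨le_rfl, zero_le_one⟩, hh0]
  · intro x hx
    have hEq : (fun t => t ^ α * deriv y t) =ᶠ[nhds x] g := by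
      filter_upwards [Ioo_mem_nhds hx.1 hx.2] with t ht
      rw [(hderIoo t ht).deriv]
      show t ^ α * (t ^ (-α) * g t) = g t
      rw [← mul_assoc, ← Real.rpow_add ht.1, add_neg_cancel, Real.rpow_zero, one_mul]
    rw [hEq.deriv_eq]
    have hG : HasDerivAt g (φ x) x := by
      refine intervalIntegral.integral_hasDerivAt_right (hφii.mono_set ?_) ?_ ?_
      · rw [hIcc, uIcc_of_le hx.1.le]; exact Icc_subset_Icc le_rfl hx.2.le
      · exact (hcφ.mono Ioo_subset_Icc_self).stronglyMeasurableAtFilter isOpen_Ioo x hx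
      · exact hcφ.continuousAt (Icc_mem_nhds hx.1 hx.2)
    rw [hG.deriv]
    show x ^ (-α) * (x ^ α * f x) = f x
    rw [← mul_assoc, ← Real.rpow_add hx.1, neg_add_cancel, Real.rpow_zero, one_mul]
end

section
/- Let α ≥ 1 and f continuous on [0,1]. If y'' + (α/x) y' = f on (0,1), with lim_{x→0⁺} x^{α} y'(x) = 0 and y continuous at 0, then y(x) = y(0) + ∫₀ˣ t^{-α} ∫₀ᵗ s^{α} f(s) ds dt for all x ∈ [0,1], i.e., the solution of the singular initial value problem is unique given y(0). -/
/-!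
Multiplying the equation by `x ^ α` turns it into `(x ^ α y')' = x ^ α f`, so integrating from `0`,
where `x ^ α y'` vanishes in the limit, gives `y' t = t ^ (-α) ∫₀ᵗ s ^ α f s ds`. Since
`s ^ α ≤ t ^ α` on `[0, t]`, this kernel is bounded by `t · sup |f|`, hence extends continuously by
`0` at the origin, and a second integration from `0` yields the formula.
-/

open Set Real intervalIntegral Filter Topology

theorem hasDerivAt_rpow_mul_of_laneEmden {α t : ℝ} {y' y'' f : ℝ → ℝ} (ht : 0 < t)
    (hd : HasDerivAt y' (y'' t) t) (heq : y'' t + α / t * y' t = f t) :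
    HasDerivAt (fun u => u ^ α * y' u) (t ^ α * f t) t := by
  refine ((hasDerivAt_rpow_const (p := α) (Or.inl ht.ne')).mul hd).congr_deriv ?_
  rw [← heq, rpow_sub_one ht.ne']
  field_simp
  ring

theorem rpow_mul_eq_integral_of_laneEmden {α b t : ℝ} {y' y'' f : ℝ → ℝ} (hα : 0 ≤ α)
    (hf : ContinuousOn f (Icc 0 b))
    (hd : ∀ x ∈ Ioo 0 b, HasDerivAt y' (y'' x) x)
    (heq : ∀ x ∈ Ioo 0 b, y'' x + α / x * y' x = f x)
    (hbc : Tendsto (fun x => x ^ α * y' x) (𝓝[>] 0) (𝓝 0)) (ht : t ∈ Ioo 0 b) :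
    t ^ α * y' t = ∫ s in (0:ℝ)..t, s ^ α * f s := by
  have hsub : Ioo 0 t ⊆ Ioo 0 b := Ioo_subset_Ioo_right ht.2.le
  have hderiv : ∀ x ∈ Ioo 0 t, HasDerivAt (fun u => u ^ α * y' u) (x ^ α * f x) x :=
    fun x hx => hasDerivAt_rpow_mul_of_laneEmden hx.1 (hd x (hsub hx)) (heq x (hsub hx))
  have hint : IntervalIntegrable (fun s => s ^ α * f s) MeasureTheory.volume 0 t :=
    ((continuousOn_id.rpow_const fun _ _ => Or.inr hα).mul
      (hf.mono (Icc_subset_Icc_right ht.2.le))).intervalIntegrable_of_Icc ht.1.le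
  have hright : Tendsto (fun u => u ^ α * y' u) (𝓝[<] t) (𝓝 (t ^ α * y' t)) :=
    (hasDerivAt_rpow_mul_of_laneEmden ht.1 (hd t ht) (heq t ht)).continuousAt.tendsto.mono_left
      nhdsWithin_le_nhds
  rw [integral_eq_sub_of_hasDerivAt_of_tendsto ht.1 hderiv hint hbc hright, sub_zero]

theorem norm_rpow_neg_mul_integral_le {α t M : ℝ} {f : ℝ → ℝ} (hα : 0 ≤ α) (ht : 0 ≤ t)
    (hM : ∀ s ∈ Ioc 0 t, ‖f s‖ ≤ M) :
    ‖t ^ (-α) * ∫ s in (0:ℝ)..t, s ^ α * f s‖ ≤ M * t := by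
  rcases ht.eq_or_lt with rfl | ht
  · simp
  have hkernel : ∀ s ∈ uIoc 0 t, ‖s ^ α * f s‖ ≤ t ^ α * M := by
    intro s hs
    rw [uIoc_of_le ht.le] at hs
    rw [norm_mul, norm_of_nonneg (rpow_nonneg hs.1.le α)]
    exact mul_le_mul (rpow_le_rpow hs.1.le hs.2 hα) (hM s hs) (norm_nonneg _)
      (rpow_nonneg ht.le α)
  calc ‖t ^ (-α) * ∫ s in (0:ℝ)..t, s ^ α * f s‖
      ≤ t ^ (-α) * (t ^ α * M * |t - 0|) := by
        rw [norm_mul, norm_of_nonneg (rpow_nonneg ht.le _)]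
        gcongr
        exact norm_integral_le_of_norm_le_const hkernel
    _ = M * t := by
        rw [sub_zero, abs_of_pos ht, rpow_neg ht.le]
        field_simp

theorem continuousOn_rpow_neg_mul_integral {α b : ℝ} {f : ℝ → ℝ} (hα : 0 ≤ α)
    (hf : ContinuousOn f (Icc 0 b)) :
    ContinuousOn (fun t => t ^ (-α) * ∫ s in (0:ℝ)..t, s ^ α * f s) (Icc 0 b) := by
  intro t ht
  rcases ht.1.eq_or_lt with rfl | ht0
  · obtain ⟨M, hM⟩ := isCompact_Icc.exists_bound_of_continuousOn hf
    have hbound : ∀ u ∈ Icc 0 b, ‖u ^ (-α) * ∫ s in (0:ℝ)..u, s ^ α * f s‖ ≤ M * u :=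
      fun u hu => norm_rpow_neg_mul_integral_le hα hu.1
        fun s hs => hM s ⟨hs.1.le, hs.2.trans hu.2⟩
    have hlin : Tendsto (fun u : ℝ => M * u) (𝓝[Icc 0 b] 0) (𝓝 0) := by
      simpa using ((continuous_const_mul M).tendsto 0).mono_left nhdsWithin_le_nhds
    simpa [ContinuousWithinAt] using
      squeeze_zero_norm' (eventually_nhdsWithin_of_forall hbound) hlin
  · have hb : 0 ≤ b := ht.1.trans ht.2
    have hg : ContinuousOn (fun s => s ^ α * f s) (uIcc 0 b) := by
      rw [uIcc_of_le hb]
      exact (continuousOn_id.rpow_const fun _ _ => Or.inr hα).mul hf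
    have hprim := continuousOn_primitive_interval' (μ := MeasureTheory.volume) hg.intervalIntegrable
      left_mem_uIcc
    rw [uIcc_of_le hb] at hprim
    exact (continuousAt_rpow_const t (-α) (Or.inl ht0.ne')).continuousWithinAt.mul (hprim t ht)

theorem stmt12_general (α : ℝ) (hα : 1 ≤ α) (f y y' y'' : ℝ → ℝ)
    (hf : ContinuousOn f (Icc 0 1))
    (hd1 : ∀ x ∈ Ioo (0:ℝ) 1, HasDerivAt y (y' x) x)
    (hd2 : ∀ x ∈ Ioo (0:ℝ) 1, HasDerivAt y' (y'' x) x)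
    (heq : ∀ x ∈ Ioo (0:ℝ) 1, y'' x + (α / x) * y' x = f x)
    (hbc : Tendsto (fun x => x ^ α * y' x) (𝓝[>] 0) (𝓝 0))
    (hyc : ContinuousOn y (Icc 0 1)) :
    ∀ x ∈ Icc (0:ℝ) 1,
      y x = y 0 + ∫ t in (0:ℝ)..x, t ^ (-α) * ∫ s in (0:ℝ)..t, s ^ α * f s := by
  intro x hx
  have hα0 : 0 ≤ α := zero_le_one.trans hα
  have hy' : ∀ t ∈ Ioo (0:ℝ) 1, y' t = t ^ (-α) * ∫ s in (0:ℝ)..t, s ^ α * f s := by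
    intro t ht
    rw [← rpow_mul_eq_integral_of_laneEmden hα0 hf hd2 heq hbc ht, rpow_neg ht.1.le,
      inv_mul_cancel_left₀ (rpow_pos_of_pos ht.1 α).ne']
  have hderiv : ∀ t ∈ Ioo 0 x,
      HasDerivAt y (t ^ (-α) * ∫ s in (0:ℝ)..t, s ^ α * f s) t := by
    intro t ht
    have ht1 : t ∈ Ioo (0:ℝ) 1 := ⟨ht.1, ht.2.trans_le hx.2⟩
    rw [← hy' t ht1]
    exact hd1 t ht1
  have hsub : Icc 0 x ⊆ Icc (0:ℝ) 1 := Icc_subset_Icc_right hx.2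
  rw [integral_eq_sub_of_hasDerivAt_of_le hx.1 (hyc.mono hsub) hderiv
    (((continuousOn_rpow_neg_mul_integral hα0 hf).mono hsub).intervalIntegrable_of_Icc hx.1)]
  ring

theorem stmt12 (α : ℝ) (hα : 1 ≤ α) (f y y' y'' : ℝ → ℝ)
    (hf : ContinuousOn f (Icc 0 1))
    (hd1 : ∀ x ∈ Ioo (0:ℝ) 1, HasDerivAt y (y' x) x)
    (hd2 : ∀ x ∈ Ioo (0:ℝ) 1, HasDerivAt y' (y'' x) x)
    (heq : ∀ x ∈ Ioo (0:ℝ) 1, y'' x + (α / x) * y' x = f x)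
    (hbc : Tendsto (fun x => x ^ α * y' x) (𝓝[>] 0) (𝓝 0))
    (hy0 : ContinuousAt y 0)
    (hyc : ContinuousOn y (Icc 0 1)) :
    ∀ x ∈ Icc (0:ℝ) 1,
      y x = y 0 + ∫ t in (0:ℝ)..x, t ^ (-α) * ∫ s in (0:ℝ)..t, s ^ α * f s :=
  stmt12_general α hα f y y' y'' hf hd1 hd2 heq hbc hyc
end

section
/- Fix α ≥ 1 and let K(x,s) = G(x,s) s^{α} where G is the Lane-Emden Green's function on (0,1]². Define the linear operator (Sφ)(x) = ∫₀¹ K(x,s) φ(s) ds on C([0,1]). Then S maps C([0,1]) into C([0,1]) and is a bounded linear operator with operator norm ‖S‖ ≤ m where m = sup_{x∈(0,1]} ∫₀¹ |K(x,s)| ds < ∞. -/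
/-!
The kernel `K(x, s) = G(x, s) s^α` depends on `x` only through `max x s`, and `|G|` decreases
in `max x s` on `(0, 1]`, so `|K(x, s)| ≤ |G(s, s)| s^α ≤ 1 - s`: for `α = 1` this is
`-log s ≤ 1/s - 1`, for `α > 1` it is Bernoulli's inequality `s^α ≥ 1 + α (s - 1)`.
With this bounded kernel, dominated convergence makes `Sφ` continuous on `[0, 1]`, and
`|Sφ(x)| ≤ (∫ |K(x, ·)|) ‖φ‖ ≤ m ‖φ‖` for `x ∈ (0, 1]`; continuity carries the bound to `x = 0`,
where the supremum defining `m` does not look.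
-/

open Set Real intervalIntegral

open MeasureTheory

noncomputable def laneEmdenKernel (α x s : ℝ) : ℝ := laneEmdenGreen α x s * s ^ α

lemma abs_laneEmdenGreen_le_self {α x s : ℝ} (hα : 1 ≤ α) (hx : x ≤ 1) (hs : 0 < s)
    (hs1 : s ≤ 1) : |laneEmdenGreen α x s| ≤ |laneEmdenGreen α s s| := by
  have hst : s ≤ max x s := le_max_right x s
  have ht1 : max x s ≤ 1 := max_le hx hs1
  have ht0 : 0 < max x s := hs.trans_le hst
  unfold laneEmdenGreen
  rw [max_self]
  split_ifs
  · rw [abs_of_nonpos (log_nonpos ht0.le ht1), abs_of_nonpos (log_nonpos hs.le hs1),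
      neg_le_neg_iff]
    exact log_le_log hs hst
  · have h1t : 1 ≤ max x s ^ (1 - α) :=
      one_le_rpow_of_pos_of_le_one_of_nonpos ht0 ht1 (by linarith)
    have hts : max x s ^ (1 - α) ≤ s ^ (1 - α) := rpow_le_rpow_of_nonpos hs hst (by linarith)
    rw [abs_div, abs_div, abs_of_nonneg (sub_nonneg.2 h1t),
      abs_of_nonneg (sub_nonneg.2 (h1t.trans hts))]
    gcongr

lemma abs_laneEmdenGreen_self_mul_rpow_le {α s : ℝ} (hα : 1 ≤ α) (hs : 0 < s) (hs1 : s ≤ 1) :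
    |laneEmdenGreen α s s| * s ^ α ≤ 1 - s := by
  unfold laneEmdenGreen
  rw [max_self]
  split_ifs with h1
  · subst h1
    have hlog : -log s ≤ s⁻¹ - 1 := by
      simpa [log_inv] using log_le_sub_one_of_pos (inv_pos.2 hs)
    rw [abs_of_nonpos (log_nonpos hs.le hs1), rpow_one]
    calc -log s * s ≤ (s⁻¹ - 1) * s := mul_le_mul_of_nonneg_right hlog hs.le
      _ = 1 - s := by field_simp
  · have hα1 : 0 < α - 1 := sub_pos.2 (lt_of_le_of_ne hα (Ne.symm h1))
    have bernoulli : 1 + α * (s - 1) ≤ s ^ α := by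
      simpa using one_add_mul_self_le_rpow_one_add (by linarith : -1 ≤ s - 1) hα
    have h1s : 1 ≤ s ^ (1 - α) := one_le_rpow_of_pos_of_le_one_of_nonpos hs hs1 (by linarith)
    rw [abs_div, abs_of_nonneg (by linarith), abs_of_neg (by linarith), neg_sub,
      div_mul_eq_mul_div, div_le_iff₀ hα1, sub_mul, ← rpow_add hs]
    simp only [sub_add_cancel, rpow_one, one_mul]
    linarith

lemma abs_laneEmdenKernel_le_one {α x s : ℝ} (hα : 1 ≤ α) (hx : x ≤ 1) (hs : 0 ≤ s)
    (hs1 : s ≤ 1) : |laneEmdenKernel α x s| ≤ 1 := by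
  rcases hs.eq_or_lt with rfl | hs
  · simp [laneEmdenKernel, zero_rpow (by linarith : α ≠ 0)]
  calc |laneEmdenKernel α x s| = |laneEmdenGreen α x s| * s ^ α := by
        rw [laneEmdenKernel, abs_mul, abs_of_pos (rpow_pos_of_pos hs α)]
    _ ≤ |laneEmdenGreen α s s| * s ^ α :=
        mul_le_mul_of_nonneg_right (abs_laneEmdenGreen_le_self hα hx hs hs1) (rpow_nonneg hs.le α)
    _ ≤ 1 := by linarith [abs_laneEmdenGreen_self_mul_rpow_le hα hs hs1]

lemma measurable_laneEmdenKernel (α x : ℝ) : Measurable (laneEmdenKernel α x) := by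
  unfold laneEmdenKernel laneEmdenGreen
  split_ifs <;> fun_prop

lemma continuous_laneEmdenKernel_left (α : ℝ) {s : ℝ} (hs : 0 < s) :
    Continuous fun x => laneEmdenKernel α x s := by
  have hne : ∀ x, max x s ≠ 0 := fun x => (hs.trans_le (le_max_right x s)).ne'
  unfold laneEmdenKernel laneEmdenGreen
  split_ifs
  · exact ((continuous_id.max continuous_const).log hne).mul continuous_const
  · exact ((((continuous_id.max continuous_const).rpow_const fun x => Or.inl (hne x)).sub
      continuous_const).div_const _).mul continuous_const

lemma intervalIntegrable_laneEmdenKernel {α x : ℝ} (hα : 1 ≤ α) (hx : x ≤ 1) :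
    IntervalIntegrable (laneEmdenKernel α x) volume 0 1 := by
  refine (intervalIntegrable_const (c := (1:ℝ))).mono_fun'
    (measurable_laneEmdenKernel α x).aestronglyMeasurable ?_
  rw [uIoc_of_le zero_le_one]
  filter_upwards [ae_restrict_mem measurableSet_Ioc] with s hs
  exact abs_laneEmdenKernel_le_one hα hx hs.1.le hs.2

lemma integral_abs_laneEmdenKernel_le_one {α x : ℝ} (hα : 1 ≤ α) (hx : x ≤ 1) :
    ∫ s in (0:ℝ)..1, |laneEmdenKernel α x s| ≤ 1 := by
  calc ∫ s in (0:ℝ)..1, |laneEmdenKernel α x s| ≤ ∫ _ in (0:ℝ)..1, (1:ℝ) :=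
        integral_mono_on zero_le_one (intervalIntegrable_laneEmdenKernel hα hx).abs
          intervalIntegrable_const fun s hs => abs_laneEmdenKernel_le_one hα hx hs.1 hs.2
    _ = 1 := by simp

noncomputable def laneEmdenTransform (α : ℝ) (φ : C(Icc (0:ℝ) 1, ℝ)) (x : ℝ) : ℝ :=
  ∫ s in (0:ℝ)..1, laneEmdenKernel α x s * φ (projIcc 0 1 zero_le_one s)

lemma intervalIntegrable_laneEmdenKernel_mul {α x : ℝ} (hα : 1 ≤ α) (hx : x ≤ 1)
    (φ : C(Icc (0:ℝ) 1, ℝ)) :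
    IntervalIntegrable (fun s => laneEmdenKernel α x s * φ (projIcc 0 1 zero_le_one s))
      volume 0 1 :=
  (intervalIntegrable_laneEmdenKernel hα hx).mul_continuousOn
    (φ.continuous.comp continuous_projIcc).continuousOn

lemma continuousOn_laneEmdenTransform {α : ℝ} (hα : 1 ≤ α) (φ : C(Icc (0:ℝ) 1, ℝ)) :
    ContinuousOn (laneEmdenTransform α φ) (Icc 0 1) := by
  intro x₀ _
  refine continuousWithinAt_of_dominated_interval (bound := fun _ => ‖φ‖)
    (Filter.Eventually.of_forall fun x => ((measurable_laneEmdenKernel α x).mul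
      (φ.continuous.comp continuous_projIcc).measurable).aestronglyMeasurable) ?_
    intervalIntegrable_const ?_
  · filter_upwards [self_mem_nhdsWithin] with x hx
    refine Filter.Eventually.of_forall fun s hs => ?_
    rw [uIoc_of_le zero_le_one] at hs
    rw [norm_mul, ← one_mul ‖φ‖]
    exact mul_le_mul (abs_laneEmdenKernel_le_one hα hx.2 hs.1.le hs.2) (φ.norm_coe_le_norm _)
      (norm_nonneg _) zero_le_one
  · refine Filter.Eventually.of_forall fun s hs => ?_
    rw [uIoc_of_le zero_le_one] at hs
    exact ((continuous_laneEmdenKernel_left α hs.1).mul continuous_const).continuousWithinAt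

lemma abs_laneEmdenTransform_le {α x : ℝ} (hα : 1 ≤ α) (hx : x ≤ 1) (φ : C(Icc (0:ℝ) 1, ℝ)) :
    |laneEmdenTransform α φ x| ≤ (∫ s in (0:ℝ)..1, |laneEmdenKernel α x s|) * ‖φ‖ := by
  rw [← intervalIntegral.integral_mul_const]
  refine (abs_integral_le_integral_abs zero_le_one).trans <|
    integral_mono_on zero_le_one (intervalIntegrable_laneEmdenKernel_mul hα hx φ).abs
      ((intervalIntegrable_laneEmdenKernel hα hx).abs.mul_const _) fun s _ => ?_
  rw [abs_mul]
  exact mul_le_mul_of_nonneg_left (φ.norm_coe_le_norm _) (abs_nonneg _)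

lemma abs_laneEmdenTransform_le_of_forall_Ioc {α M : ℝ} (hα : 1 ≤ α)
    (hM : ∀ x ∈ Ioc (0:ℝ) 1, ∫ s in (0:ℝ)..1, |laneEmdenKernel α x s| ≤ M)
    (φ : C(Icc (0:ℝ) 1, ℝ)) {x : ℝ} (hx : x ∈ Icc (0:ℝ) 1) :
    |laneEmdenTransform α φ x| ≤ M * ‖φ‖ := by
  have hcont := ((continuousOn_laneEmdenTransform hα φ).abs x hx).mono Ioc_subset_Icc_self
  refine ContinuousWithinAt.closure_le (by rwa [closure_Ioc zero_ne_one]) hcont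
    continuousWithinAt_const fun y hy => ?_
  exact (abs_laneEmdenTransform_le hα hy.2 φ).trans
    (mul_le_mul_of_nonneg_right (hM y hy) (norm_nonneg _))

noncomputable def laneEmdenOperator {α : ℝ} (hα : 1 ≤ α) :
    C(Icc (0:ℝ) 1, ℝ) →ₗ[ℝ] C(Icc (0:ℝ) 1, ℝ) where
  toFun φ :=
    ⟨fun x => laneEmdenTransform α φ x, (continuousOn_laneEmdenTransform hα φ).domRestrict⟩
  map_add' φ ψ := by
    ext x
    simp only [ContinuousMap.coe_mk, ContinuousMap.add_apply, laneEmdenTransform, mul_add]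
    exact integral_add (intervalIntegrable_laneEmdenKernel_mul hα x.2.2 φ)
      (intervalIntegrable_laneEmdenKernel_mul hα x.2.2 ψ)
  map_smul' c φ := by
    ext x
    simp only [ContinuousMap.coe_mk, ContinuousMap.smul_apply, smul_eq_mul, RingHom.id_apply,
      laneEmdenTransform, mul_left_comm _ c, intervalIntegral.integral_const_mul]

theorem stmt19 (α : ℝ) (hα : 1 ≤ α) (m : ℝ)
    (hm : m = sSup ((fun x : ℝ =>
      ∫ s in (0:ℝ)..1, |laneEmdenGreen α x s * s ^ α|) '' Ioc (0:ℝ) 1)) :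
    BddAbove ((fun x : ℝ =>
      ∫ s in (0:ℝ)..1, |laneEmdenGreen α x s * s ^ α|) '' Ioc (0:ℝ) 1) ∧
    ∃ S : C(Icc (0:ℝ) 1, ℝ) →L[ℝ] C(Icc (0:ℝ) 1, ℝ),
      (∀ φ : C(Icc (0:ℝ) 1, ℝ), ∀ x : Icc (0:ℝ) 1,
        (S φ) x = ∫ s in (0:ℝ)..1,
          laneEmdenGreen α (x : ℝ) s * s ^ α * φ (projIcc 0 1 (by norm_num) s)) ∧
      ‖S‖ ≤ m := by
  have hbdd : BddAbove ((fun x : ℝ =>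
      ∫ s in (0:ℝ)..1, |laneEmdenGreen α x s * s ^ α|) '' Ioc (0:ℝ) 1) := by
    refine ⟨1, ?_⟩
    rintro _ ⟨x, hx, rfl⟩
    exact integral_abs_laneEmdenKernel_le_one hα hx.2
  have hle : ∀ x ∈ Ioc (0:ℝ) 1, ∫ s in (0:ℝ)..1, |laneEmdenKernel α x s| ≤ m :=
    fun x hx => hm ▸ le_csSup hbdd (mem_image_of_mem _ hx)
  have hm0 : 0 ≤ m := (integral_nonneg zero_le_one fun _ _ => abs_nonneg _).trans
    (hle 1 ⟨one_pos, le_rfl⟩)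
  have hbound : ∀ φ, ‖laneEmdenOperator hα φ‖ ≤ m * ‖φ‖ := fun φ =>
    (ContinuousMap.norm_le _ (by positivity)).2 fun x =>
      abs_laneEmdenTransform_le_of_forall_Ioc hα hle φ x.2
  exact ⟨hbdd, (laneEmdenOperator hα).mkContinuous m hbound, fun φ x => rfl,
    LinearMap.mkContinuous_norm_le _ hm0 hbound⟩
end
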